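/- arXiv:1706.10251 — 3 statements merged into one kernel-verified Lean document; each statement's English description precedes it below -/
import Mathlib

section
/- For every k ≥ 1 and every real x, the Chebyshev polynomial of the first kind T_k satisfies the identity ∫_{-1}^{1} (T_k'(x) - T_k'(y))/(x - y) · (2/π)√(1-y²) dy = 2x·T_k'(x) - 2k·T_k(x), where the integrand is interpreted as T_k''(x) at y = x. -/
open MeasureTheory Real Polynomial

/-- The `k`-th Chebyshev polynomial of the first kind, as a function `ℝ → ℝ`. -/
noncomputable def chebT (k : ℤ) (x : ℝ) : ℝ := (Polynomial.Chebyshev.T ℝ k).eval x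

/-- Its derivative `T_k'` as a function. -/
noncomputable def chebT' (k : ℤ) (x : ℝ) : ℝ :=
  (Polynomial.derivative (Polynomial.Chebyshev.T ℝ k)).eval x

/-- Its second derivative `T_k''` as a function. -/
noncomputable def chebT'' (k : ℤ) (x : ℝ) : ℝ :=
  (Polynomial.derivative (Polynomial.derivative (Polynomial.Chebyshev.T ℝ k))).eval x

/-- The density of the semicircle law on `(-1,1)`. -/
noncomputable def semicircleDensity (y : ℝ) : ℝ := (2 / Real.pi) * Real.sqrt (1 - y ^ 2)

/-!
Write `Δₓ p = (p - p(x)) / (X - x)` for the polynomial divided difference; it is linear in `p`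
and `Δₓ p (x) = p'(x)`, so the integrand is `Δₓ T_k'` and the left side is `∫ Δₓ T_k' dμ_sc`.
As `T_k' = k U_{k-1}` and `T_k = X U_{k-1} - U_{k-2}`, both sides equal `2k U_{k-2}(x)` once we know
`∫ Δₓ U_n dμ_sc = 2 U_{n-1}(x)`. That follows by induction from `U_{n+2} = 2X U_{n+1} - U_n`,
`Δₓ (X p) = p + x Δₓ p` and the orthogonality `∫ U_n dμ_sc = δ_{n0}`; the last reduces to the
orthogonality of `T_n` for the weight `(1 - y²)^{-1/2}` via `2 (1 - X²) U_n = T_n - T_{n+2}`.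
-/

namespace Polynomial

variable {R : Type*} [CommRing R]

noncomputable def divDiff (p : R[X]) (x : R) : R[X] := (p - C (p.eval x)) /ₘ (X - C x)

theorem X_sub_C_mul_divDiff (p : R[X]) (x : R) :
    (X - C x) * divDiff p x = p - C (p.eval x) :=
  mul_divByMonic_eq_iff_isRoot.2 (by simp)

theorem divDiff_eq_of_X_sub_C_mul {p q : R[X]} {x : R} (h : (X - C x) * q = p - C (p.eval x)) :
    divDiff p x = q := by
  rw [divDiff, ← h, mul_divByMonic_cancel_left _ (monic_X_sub_C x)]

theorem divDiff_C (c x : R) : divDiff (C c) x = 0 :=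
  divDiff_eq_of_X_sub_C_mul (by simp)

theorem divDiff_sub (p q : R[X]) (x : R) : divDiff (p - q) x = divDiff p x - divDiff q x :=
  divDiff_eq_of_X_sub_C_mul (by
    rw [eval_sub, map_sub]
    linear_combination X_sub_C_mul_divDiff p x - X_sub_C_mul_divDiff q x)

theorem divDiff_C_mul (c : R) (p : R[X]) (x : R) : divDiff (C c * p) x = C c * divDiff p x :=
  divDiff_eq_of_X_sub_C_mul (by
    rw [eval_mul, eval_C, C_mul]
    linear_combination C c * X_sub_C_mul_divDiff p x)

theorem divDiff_X (x : R) : divDiff X x = 1 :=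
  divDiff_eq_of_X_sub_C_mul (by simp)

theorem divDiff_X_mul (p : R[X]) (x : R) : divDiff (X * p) x = p + C x * divDiff p x :=
  divDiff_eq_of_X_sub_C_mul (by
    rw [eval_mul, eval_X, C_mul]
    linear_combination C x * X_sub_C_mul_divDiff p x)

theorem eval_divDiff_self (p : R[X]) (x : R) : (divDiff p x).eval x = p.derivative.eval x := by
  have h := congrArg (fun q ↦ (derivative q).eval x) (X_sub_C_mul_divDiff p x)
  simpa using h

theorem eval_divDiff {K : Type*} [Field K] [DecidableEq K] (p : K[X]) (x y : K) :
    (divDiff p x).eval y =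
      if y = x then p.derivative.eval x else (p.eval x - p.eval y) / (x - y) := by
  split_ifs with hyx
  · rw [hyx, eval_divDiff_self]
  · have h := congrArg (eval y) (X_sub_C_mul_divDiff p x)
    simp only [eval_mul, eval_sub, eval_X, eval_C] at h
    rw [eq_div_iff (sub_ne_zero.2 (Ne.symm hyx))]
    linear_combination -h

end Polynomial

namespace Polynomial.Chebyshev

variable (R : Type*) [CommRing R]

theorem two_mul_one_sub_X_sq_mul_U (n : ℤ) :
    2 * ((1 - X ^ 2) * U R n) = T R n - T R (n + 2) := by
  linear_combination 2 * T_eq_X_mul_T_sub_pol_U R n - T_add_two R n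

open MeasureTheory in
theorem integral_eval_T_real_measureT (n : ℤ) :
    ∫ y, (T ℝ n).eval y ∂measureT = if n = 0 then π else 0 := by
  split_ifs with hn
  · rw [hn, integral_eval_T_real_measureT_zero]
  · exact integral_eval_T_real_measureT_of_ne_zero hn

end Polynomial.Chebyshev

open Polynomial.Chebyshev Set

theorem continuous_semicircleDensity : Continuous semicircleDensity := by
  unfold semicircleDensity
  fun_prop

noncomputable def semicircleIntegral : ℝ[X] →ₗ[ℝ] ℝ where
  toFun p := ∫ y in Ioo (-1 : ℝ) 1, p.eval y * semicircleDensity y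
  map_add' p q := by
    have hint (r : ℝ[X]) : IntegrableOn (fun y ↦ r.eval y * semicircleDensity y) (Ioo (-1) 1) :=
      ((r.continuous.mul continuous_semicircleDensity).integrableOn_Icc).mono_set
        Ioo_subset_Icc_self
    simp only [eval_add, add_mul]
    exact integral_add (hint p) (hint q)
  map_smul' c p := by
    simp only [eval_smul, smul_eq_mul, mul_assoc, integral_const_mul, RingHom.id_apply]

theorem semicircleIntegral_apply (p : ℝ[X]) :
    semicircleIntegral p = ∫ y in Ioo (-1 : ℝ) 1, p.eval y * semicircleDensity y := rfl

theorem semicircleIntegral_eq_integral_measureT (p : ℝ[X]) :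
    semicircleIntegral p = 2 / π * ∫ y, (p * (1 - X ^ 2)).eval y ∂measureT := by
  rw [integral_measureT, intervalIntegral.integral_of_le (by norm_num),
    integral_Ioc_eq_integral_Ioo, ← integral_const_mul, semicircleIntegral_apply]
  congr 1 with y
  -- `√t = t / √t` holds for every real `t`, the junk values making both sides `0` for `t ≤ 0`
  rw [semicircleDensity, eval_mul, eval_sub, eval_one, eval_pow, eval_X, mul_assoc,
    sqrt_inv, ← div_eq_mul_inv (1 - y ^ 2), div_sqrt]
  ring

theorem semicircleIntegral_U (n : ℕ) : semicircleIntegral (U ℝ n) = if n = 0 then 1 else 0 := by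
  have hU (y : ℝ) :
      (U ℝ n * (1 - X ^ 2)).eval y = ((T ℝ n).eval y - (T ℝ (n + 2)).eval y) / 2 := by
    rw [eq_div_iff two_ne_zero, ← eval_sub, ← two_mul_one_sub_X_sq_mul_U]
    simp only [eval_mul, eval_ofNat]
    ring
  have hT (m : ℤ) : Integrable (fun y ↦ (T ℝ m).eval y) measureT :=
    integrable_measureT (T ℝ m).continuous.continuousOn
  simp_rw [semicircleIntegral_eq_integral_measureT, hU, integral_div, integral_sub (hT _) (hT _),
    integral_eval_T_real_measureT, if_neg (show (n : ℤ) + 2 ≠ 0 by omega), Nat.cast_eq_zero]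
  split_ifs
  · field_simp; ring
  · simp

theorem semicircleIntegral_divDiff_U (x : ℝ) :
    ∀ n : ℕ, semicircleIntegral (divDiff (U ℝ n) x) = 2 * (U ℝ (n - 1)).eval x
  | 0 => by
    rw [Nat.cast_zero, U_zero, ← C_1, divDiff_C, map_zero, zero_sub, U_neg_one, eval_zero, mul_zero]
  | 1 => by
    rw [Nat.cast_one, U_one, sub_self, U_zero, ← C_ofNat, divDiff_C_mul, divDiff_X,
      ← smul_eq_C_mul, map_smul]
    simpa using semicircleIntegral_U 0
  | n + 2 => by
    have hrec : U ℝ ((n + 2 : ℕ) : ℤ) = C 2 * (X * U ℝ (n + 1 : ℕ)) - U ℝ n := by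
      push_cast
      rw [U_add_two, ← C_ofNat, mul_assoc]
    rw [hrec, divDiff_sub, divDiff_C_mul, divDiff_X_mul, ← smul_eq_C_mul, map_sub, map_smul,
      map_add, ← smul_eq_C_mul, map_smul, semicircleIntegral_U, if_neg n.succ_ne_zero,
      semicircleIntegral_divDiff_U x (n + 1), semicircleIntegral_divDiff_U x n]
    have hU := congrArg (eval x) (U_sub_one ℝ n)
    simp only [eval_sub, eval_mul, eval_X, eval_ofNat] at hU
    push_cast
    simp only [add_sub_cancel_right, smul_eq_mul, show (n : ℤ) + 2 - 1 = n + 1 by ring]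
    linear_combination -2 * hU

theorem semicircleIntegral_divDiff_derivative_T (k : ℕ) (x : ℝ) :
    semicircleIntegral (divDiff (derivative (T ℝ k)) x)
      = 2 * x * (derivative (T ℝ k)).eval x - 2 * k * (T ℝ k).eval x := by
  rcases k with _ | n
  · rw [Nat.cast_zero, T_zero, derivative_one, ← C_0, divDiff_C]
    simp
  · have hderiv : derivative (T ℝ (n + 1 : ℕ)) = C ((n : ℝ) + 1) * U ℝ n := by
      rw [T_derivative_eq_U]
      push_cast
      simp only [add_sub_cancel_right, map_add, map_natCast, map_one]
    have hT := congrArg (eval x) (T_eq_X_mul_U_sub_U ℝ (n - 1))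
    simp only [sub_add_cancel, show (n : ℤ) - 1 + 2 = n + 1 by ring, eval_sub, eval_mul,
      eval_X] at hT
    rw [hderiv, divDiff_C_mul, ← smul_eq_C_mul, map_smul, semicircleIntegral_divDiff_U, eval_mul,
      eval_C]
    push_cast
    rw [hT]
    simp only [smul_eq_mul]
    ring

theorem chebyshev_eigen_identity_general (k : ℕ) (x : ℝ) :
    (∫ y in Set.Ioo (-1 : ℝ) 1,
        (if y = x then chebT'' k x else (chebT' k x - chebT' k y) / (x - y)) *
          semicircleDensity y)
      = 2 * x * chebT' k x - 2 * k * chebT k x := by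
  have h := semicircleIntegral_divDiff_derivative_T k x
  simp only [semicircleIntegral_apply, eval_divDiff] at h
  exact h

/-- for every `k ≥ 1` and every real `x`,
`∫_{-1}^{1} (T_k'(x) - T_k'(y))/(x - y) μ_sc(dy) = 2x T_k'(x) - 2k T_k(x)`,
the integrand being interpreted as `T_k''(x)` at `y = x`. -/
theorem chebyshev_eigen_identity (k : ℕ) (hk : 1 ≤ k) (x : ℝ) :
    (∫ y in Set.Ioo (-1 : ℝ) 1,
        (if y = x then chebT'' k x else (chebT' k x - chebT' k y) / (x - y)) *
          semicircleDensity y)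
      = 2 * x * chebT' k x - 2 * k * chebT k x :=
  chebyshev_eigen_identity_general k x
end

section
/- For any function f of class C⁴ on ℝ and any real numbers s, t, u, v, the following identity holds: (f'(s)-f'(t))/(s-t) + (f'(u)-f'(v))/(u-v) - (f'(s)-f'(v))/(s-v) - (f'(u)-f'(t))/(u-t) = (s-u)(t-v) ∫_{[0,1]³} f⁗(ac(s-u) + (1-a)b(t-v) + au + (1-a)v) · a(1-a) da db dc, where each difference quotient is interpreted as f'' when the two arguments coincide. -/
/-!
Write each difference quotient of `f'` as `∫₀¹ f''(a x + (1 - a) y) da`. The left side then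
becomes `∫₀¹` of the mixed second difference
`g (X + Y) - g (X' + Y) - g (X + Y') + g (X' + Y')` of `g = f''` at `X = a s`, `X' = a u`,
`Y = (1 - a) t`, `Y' = (1 - a) v`, and the fundamental theorem of calculus, applied once in `Y`
and once in `X`, turns this into `(X - X') (Y - Y')` times a double integral of `g'' = f⁗`.
-/

open MeasureTheory Real

/-- Difference quotient of `f'`, interpreted as `f''` on the diagonal. -/
noncomputable def diffQuot (f : ℝ → ℝ) (x y : ℝ) : ℝ :=
  if x = y then deriv (deriv f) x else (deriv f x - deriv f y) / (x - y)

open Set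

theorem Continuous.integrableOn_Ioo {X E : Type*} [TopologicalSpace X] [MeasurableSpace X]
    [OpensMeasurableSpace X] [Preorder X] [CompactIccSpace X] [T2Space X]
    [NormedAddCommGroup E] {μ : Measure X} [IsFiniteMeasureOnCompacts μ] {f : X → E} {a b : X}
    (hf : Continuous f) : IntegrableOn f (Ioo a b) μ :=
  hf.integrableOn_Icc.mono_set Ioo_subset_Icc_self

lemma sub_eq_mul_integral_deriv {g g' : ℝ → ℝ} (hg : ∀ x, HasDerivAt g (g' x) x)
    (hg' : Continuous g') (x y : ℝ) :
    g x - g y = (x - y) * ∫ c in Ioo (0 : ℝ) 1, g' (y + c * (x - y)) := by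
  have := intervalIntegral.integral_unitInterval_deriv_eq_sub (z₀ := y) (z₁ := x - y)
    (hg'.comp (by fun_prop)).continuousOn fun c _ => hg _
  simp only [smul_eq_mul, add_sub_cancel] at this
  rw [← this, intervalIntegral.integral_of_le zero_le_one, integral_Ioc_eq_integral_Ioo]

lemma diffQuot_eq_integral {f : ℝ → ℝ} (hf : ContDiff ℝ 2 f) (x y : ℝ) :
    diffQuot f x y = ∫ a in Ioo (0 : ℝ) 1, deriv (deriv f) (a * x + (1 - a) * y) := by
  by_cases hxy : x = y
  · subst hxy
    have hx : ∀ a : ℝ, a * x + (1 - a) * x = x := fun a => by ring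
    simp [diffQuot, hx]
  · have hdf : ContDiff ℝ 1 (deriv f) := hf.deriv'
    rw [diffQuot, if_neg hxy, sub_eq_mul_integral_deriv
      (fun z => (hdf.differentiable one_ne_zero z).hasDerivAt) (hdf.continuous_deriv le_rfl),
      mul_div_cancel_left₀ _ (sub_ne_zero.mpr hxy)]
    congr! 3 with a
    ring

lemma mixed_difference_eq_integral {g : ℝ → ℝ} (hg : ContDiff ℝ 2 g) (x x' y y' : ℝ) :
    g (x + y) - g (x' + y) - g (x + y') + g (x' + y') =
      (x - x') * (y - y') * ∫ b in Ioo (0 : ℝ) 1, ∫ c in Ioo (0 : ℝ) 1,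
        deriv (deriv g) (x' + c * (x - x') + (y' + b * (y - y'))) := by
  have hdg : ContDiff ℝ 1 (deriv g) := hg.deriv'
  have hg1 : ∀ z, HasDerivAt g (deriv g z) z :=
    fun z => (hg.differentiable two_ne_zero z).hasDerivAt
  have hdg1 : ∀ z, HasDerivAt (deriv g) (deriv (deriv g) z) z :=
    fun z => (hdg.differentiable one_ne_zero z).hasDerivAt
  have hd2 : Continuous (deriv (deriv g)) := hdg.continuous_deriv le_rfl
  have hdiff : ∀ z, deriv g (x + z) - deriv g (x' + z) =
      (x - x') * ∫ c in Ioo (0 : ℝ) 1, deriv (deriv g) (x' + c * (x - x') + z) := by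
    intro z
    rw [sub_eq_mul_integral_deriv hdg1 hd2, add_sub_add_right_eq_sub]
    congr! 4 with c
    ring
  have hh : ∀ z, HasDerivAt (fun z => g (x + z) - g (x' + z))
      (deriv g (x + z) - deriv g (x' + z)) z := fun z =>
    ((hg1 _).comp_const_add x z).sub ((hg1 _).comp_const_add x' z)
  have := sub_eq_mul_integral_deriv hh (by fun_prop) y y'
  simp only [hdiff, integral_const_mul] at this
  linear_combination this

lemma mixed_difference_convex_comb_eq_integral {g : ℝ → ℝ} (hg : ContDiff ℝ 2 g)
    (s t u v a : ℝ) :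
    g (a * s + (1 - a) * t) + g (a * u + (1 - a) * v)
        - g (a * s + (1 - a) * v) - g (a * u + (1 - a) * t) =
      (s - u) * (t - v) * ∫ b in Ioo (0 : ℝ) 1, ∫ c in Ioo (0 : ℝ) 1,
        deriv (deriv g) (a * c * (s - u) + (1 - a) * b * (t - v) + a * u + (1 - a) * v) *
          (a * (1 - a)) := by
  have harg : ∀ b c : ℝ,
      a * u + c * (a * s - a * u) + ((1 - a) * v + b * ((1 - a) * t - (1 - a) * v)) =
        a * c * (s - u) + (1 - a) * b * (t - v) + a * u + (1 - a) * v := fun b c => by ring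
  have := mixed_difference_eq_integral hg (a * s) (a * u) ((1 - a) * t) ((1 - a) * v)
  simp only [harg, integral_mul_const] at this ⊢
  linear_combination this

/-- the four-point difference-quotient identity for a `C⁴` function. -/
theorem fourth_derivative_interpolation (f : ℝ → ℝ) (hf : ContDiff ℝ 4 f) (s t u v : ℝ) :
    diffQuot f s t + diffQuot f u v - diffQuot f s v - diffQuot f u t
      = (s - u) * (t - v) *
        ∫ a in Set.Ioo (0 : ℝ) 1, ∫ b in Set.Ioo (0 : ℝ) 1, ∫ c in Set.Ioo (0 : ℝ) 1,
          iteratedDeriv 4 f (a * c * (s - u) + (1 - a) * b * (t - v) + a * u + (1 - a) * v) *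
            (a * (1 - a)) := by
  have hf2 : ContDiff ℝ 2 (deriv (deriv f)) := hf.deriv'.deriv'
  have hint : ∀ x y : ℝ,
      IntegrableOn (fun a => deriv (deriv f) (a * x + (1 - a) * y)) (Ioo 0 1) :=
    fun x y => (hf2.continuous.comp (by fun_prop)).integrableOn_Ioo
  have hint₂ : IntegrableOn (fun a => deriv (deriv f) (a * s + (1 - a) * t)
      + deriv (deriv f) (a * u + (1 - a) * v)) (Ioo 0 1) := (hint s t).add (hint u v)
  have hint₃ : IntegrableOn (fun a => deriv (deriv f) (a * s + (1 - a) * t)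
      + deriv (deriv f) (a * u + (1 - a) * v) - deriv (deriv f) (a * s + (1 - a) * v))
      (Ioo 0 1) := hint₂.sub (hint s v)
  simp only [diffQuot_eq_integral (hf.of_le (by norm_num))]
  rw [← integral_add (hint s t) (hint u v), ← integral_sub hint₂ (hint s v),
    ← integral_sub hint₃ (hint u t), ← integral_const_mul]
  refine setIntegral_congr_fun measurableSet_Ioo fun a _ => ?_
  simpa only [iteratedDeriv_succ, iteratedDeriv_zero]
    using mixed_difference_convex_comb_eq_integral hf2 s t u v a
end

section
/- Let φ ∈ C^{k,1}([-1,1]) (Lipschitz k-th derivative) and F_k(x,t) = (φ(t) - Λ_k[φ](x,t))/(t-x)^{k+1}. Then the function x ↦ ∫_{-1}^{1} F_k(x,t) ϱ(dt) is α-Hölder continuous on [-1,1] for every α ≤ 1/2. -/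
open MeasureTheory Real Set

/-- Density of the arcsine law on `(-1,1)`. -/
noncomputable def arcsineDensity (x : ℝ) : ℝ := 1 / (Real.pi * Real.sqrt (1 - x ^ 2))

/-- The degree-`k` Taylor polynomial of `φ` at `x`, evaluated at `t`. -/
noncomputable def taylorPoly (φ : ℝ → ℝ) (k : ℕ) (x t : ℝ) : ℝ :=
  ∑ i ∈ Finset.range (k + 1), iteratedDeriv i φ x * (t - x) ^ i / (Nat.factorial i)

/-- `F_k(x,t) = (φ(t) - Λ_k[φ](x,t))/(t-x)^{k+1}`. -/
noncomputable def taylorRemainderQuot (φ : ℝ → ℝ) (k : ℕ) (x t : ℝ) : ℝ :=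
  (φ t - taylorPoly φ k x t) / (t - x) ^ (k + 1)

/-!
With `g = φ⁽ᵏ⁾` an `L`-Lipschitz function and `k ≥ 1`, Taylor's formula with integral remainder
gives `(φ t - Λ_k[φ](x,t)) / (t - x)^k = ∫₀¹ g(t + u(x - t)) u^(k-1)/(k-1)! du - g x / k!`
(for `k = 0` the left side is `φ t - φ x`), which is `2L`-Lipschitz in `x` and vanishes at
`x = t`. Dividing it by `t - x` shows `|F_k(x,t)| ≤ 2L` and
`|F_k(x,t) - F_k(y,t)| ≤ 4L min(1, |x - y| / |t - x|)`.

So everything reduces to `∫ min(1, δ/|t - x|) ϱ(dt) = O(√δ)` uniformly in `x ∈ [-1,1]`.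
Bounding `ϱ(t)` by `(1 - t)^(-1/2) + (1 + t)^(-1/2)` and reflecting `t ↦ -t`, it suffices to
treat the weight `(1 - t)^(-1/2)`, for which the integrand is dominated by three explicit
functions, each of integral `O(√δ)`. Finally `√δ ≤ 2 δ^α` for `δ ≤ 2` and `α ≤ 1/2`.
-/

open scoped NNReal

theorem taylorPoly_self (φ : ℝ → ℝ) (k : ℕ) (t : ℝ) : taylorPoly φ k t t = φ t := by
  rw [taylorPoly, Finset.sum_eq_single 0 (fun i _ hi => by simp [hi]) (by simp)]
  simp

theorem taylorPoly_eq_taylorWithinEval {φ : ℝ → ℝ} {n : ℕ} (hφ : ContDiff ℝ n φ) {x t : ℝ}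
    (hxt : x ≠ t) : taylorPoly φ n x t = taylorWithinEval φ n (uIcc x t) x t := by
  rw [taylorPoly, taylor_within_apply]
  refine Finset.sum_congr rfl fun i hi => ?_
  rw [iteratedDerivWithin_eq_iteratedDeriv (uniqueDiffOn_uIcc hxt)
    (hφ.contDiffAt.of_le (by exact_mod_cast Finset.mem_range_succ_iff.1 hi)) left_mem_uIcc,
    smul_eq_mul]
  ring

theorem sub_taylorPoly_eq_integral {φ : ℝ → ℝ} {n : ℕ} (hφ : ContDiff ℝ (n + 1) φ) (x t : ℝ) :
    φ t - taylorPoly φ n x t =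
      ∫ s in x..t, (t - s) ^ n / Nat.factorial n * iteratedDeriv (n + 1) φ s := by
  rcases eq_or_ne x t with rfl | hxt
  · simp [taylorPoly_self]
  rw [taylorPoly_eq_taylorWithinEval (hφ.of_le (by norm_cast; omega)) hxt,
    taylor_integral_remainder hφ.contDiffOn]
  refine intervalIntegral.integral_congr fun s hs => ?_
  rw [iteratedDerivWithin_eq_iteratedDeriv (uniqueDiffOn_uIcc hxt) hφ.contDiffAt hs, smul_eq_mul]

theorem sub_taylorPoly_eq_mul_integral {φ : ℝ → ℝ} {n : ℕ} (hφ : ContDiff ℝ (n + 1) φ)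
    (x t : ℝ) :
    φ t - taylorPoly φ n x t = (t - x) ^ (n + 1) *
      ∫ u in (0 : ℝ)..1, iteratedDeriv (n + 1) φ (t + u * (x - t)) * u ^ n / Nat.factorial n := by
  rcases eq_or_ne x t with rfl | hxt
  · simp [taylorPoly_self]
  set f : ℝ → ℝ := fun s => (t - s) ^ n / Nat.factorial n * iteratedDeriv (n + 1) φ s
  have hxt' : x - t ≠ 0 := sub_ne_zero.2 hxt
  calc φ t - taylorPoly φ n x t = ∫ s in x..t, f s := sub_taylorPoly_eq_integral hφ x t
    _ = (t - x) * ∫ u in (0 : ℝ)..1, f ((x - t) * u + t) := by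
      rw [intervalIntegral.integral_comp_mul_add f hxt', smul_eq_mul, mul_zero, zero_add, mul_one,
        sub_add_cancel, intervalIntegral.integral_symm t x]
      field_simp
      ring
    _ = _ := by
      rw [pow_succ', mul_assoc, ← intervalIntegral.integral_const_mul ((t - x) ^ n)]
      refine congrArg _ (intervalIntegral.integral_congr fun u _ => ?_)
      simp only [f]
      rw [show t - ((x - t) * u + t) = u * (t - x) by ring, mul_pow,
        show (x - t) * u + t = t + u * (x - t) by ring]
      ring

theorem lipschitzOnWith_integral_comp_segment {g : ℝ → ℝ} {K : ℝ≥0} {s : Set ℝ}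
    (hs : Convex ℝ s) (hg : LipschitzOnWith K g s) {t : ℝ} (ht : t ∈ s) (n : ℕ) :
    LipschitzOnWith K
      (fun x => ∫ u in (0 : ℝ)..1, g (t + u * (x - t)) * u ^ n / Nat.factorial n) s := by
  have hmem : ∀ x ∈ s, ∀ u ∈ Icc (0 : ℝ) 1, t + u * (x - t) ∈ s := fun x hx u hu =>
    hs.add_smul_sub_mem ht hx hu
  have hint : ∀ x ∈ s, IntervalIntegrable
      (fun u => g (t + u * (x - t)) * u ^ n / Nat.factorial n) volume 0 1 := fun x hx =>
    ((hg.continuousOn.comp (by fun_prop) fun u hu => hmem x hx u (by simpa using hu)).mul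
      (by fun_prop)).div_const _ |>.intervalIntegrable
  refine LipschitzOnWith.of_dist_le_mul fun x hx y hy => ?_
  rw [dist_eq_norm, ← intervalIntegral.integral_sub (hint x hx) (hint y hy)]
  refine (intervalIntegral.norm_integral_le_of_norm_le_const (C := K * |x - y|)
    fun u hu => ?_).trans_eq (by simp [Real.dist_eq])
  have hu' : u ∈ Icc (0 : ℝ) 1 := Ioc_subset_Icc_self (by simpa using hu)
  have hgu : |g (t + u * (x - t)) - g (t + u * (y - t))| ≤ K * |x - y| := by
    refine (hg.dist_le_mul _ (hmem x hx u hu') _ (hmem y hy u hu')).trans ?_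
    rw [Real.dist_eq, show t + u * (x - t) - (t + u * (y - t)) = u * (x - y) by ring,
      abs_mul, abs_of_nonneg hu'.1]
    exact mul_le_mul_of_nonneg_left (mul_le_of_le_one_left (abs_nonneg _) hu'.2) K.2
  have hw0 : 0 ≤ u ^ n / Nat.factorial n := by have := hu'.1; positivity
  have hw : u ^ n / Nat.factorial n ≤ 1 :=
    div_le_one_of_le₀ ((pow_le_one₀ hu'.1 hu'.2).trans (Nat.one_le_cast.2 (Nat.factorial_pos n)))
      (Nat.cast_nonneg _)
  rw [Real.norm_eq_abs, ← sub_div, ← sub_mul, mul_div_assoc, abs_mul, abs_of_nonneg hw0]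
  exact (mul_le_mul hgu hw hw0 (by positivity)).trans_eq (mul_one _)

theorem lipschitzOnWith_sub_taylorPoly_div_pow {φ : ℝ → ℝ} {k : ℕ} (hφ : ContDiff ℝ k φ)
    {K : ℝ≥0} {s : Set ℝ} (hs : Convex ℝ s) (hK : LipschitzOnWith K (iteratedDeriv k φ) s)
    {t : ℝ} (ht : t ∈ s) :
    LipschitzOnWith (2 * K) (fun x => (φ t - taylorPoly φ k x t) / (t - x) ^ k) s := by
  cases k with
  | zero =>
    simp only [taylorPoly, zero_add, Finset.range_one, Finset.sum_singleton, iteratedDeriv_zero,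
      pow_zero, Nat.factorial_zero, Nat.cast_one, mul_one, div_one] at hK ⊢
    exact ((LipschitzWith.const (φ t)).lipschitzOnWith.sub hK).weaken (by simp [two_mul])
  | succ n =>
    have hrepr : ∀ x, (φ t - taylorPoly φ (n + 1) x t) / (t - x) ^ (n + 1) =
        (∫ u in (0 : ℝ)..1, iteratedDeriv (n + 1) φ (t + u * (x - t)) * u ^ n / Nat.factorial n) -
          iteratedDeriv (n + 1) φ x / Nat.factorial (n + 1) := by
      intro x
      rcases eq_or_ne x t with rfl | hxt
      · rw [taylorPoly_self, sub_self, zero_div, eq_comm, sub_eq_zero]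
        simp only [sub_self, mul_zero, add_zero]
        rw [intervalIntegral.integral_div, intervalIntegral.integral_const_mul, integral_pow,
          Nat.factorial_succ]
        push_cast
        field_simp
        ring
      · rw [div_eq_iff (pow_ne_zero _ (sub_ne_zero.2 hxt.symm)), taylorPoly, Finset.sum_range_succ,
          ← taylorPoly, sub_add_eq_sub_sub, sub_taylorPoly_eq_mul_integral (hφ.of_le le_rfl)]
        ring
    have hdiv : LipschitzOnWith K
        (fun x => iteratedDeriv (n + 1) φ x / Nat.factorial (n + 1)) s :=
      LipschitzOnWith.of_dist_le_mul fun x hx y hy => by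
        rw [Real.dist_eq, ← sub_div, abs_div, Nat.abs_cast]
        exact (div_le_self (abs_nonneg _) (Nat.one_le_cast.2 (Nat.factorial_pos _))).trans
          (hK.dist_le_mul x hx y hy)
    simp_rw [hrepr]
    exact ((lipschitzOnWith_integral_comp_segment hs hK ht n).sub hdiv).weaken (by rw [two_mul])

section LipschitzDivSub

variable {H : ℝ → ℝ} {C : ℝ≥0} {s : Set ℝ} {t x y : ℝ}

theorem abs_div_sub_le_of_lipschitzOnWith (hH : LipschitzOnWith C H s) (ht : t ∈ s) (hx : x ∈ s)
    (hHt : H t = 0) : |H x / (t - x)| ≤ C := by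
  rw [abs_div]
  refine div_le_of_le_mul₀ (abs_nonneg _) C.2 ?_
  simpa [hHt, Real.dist_eq, abs_sub_comm x t] using hH.dist_le_mul x hx t ht

theorem abs_div_sub_div_le_of_lipschitzOnWith (hH : LipschitzOnWith C H s) (ht : t ∈ s)
    (hx : x ∈ s) (hy : y ∈ s) (hHt : H t = 0) (htx : t ≠ x) :
    |H x / (t - x) - H y / (t - y)| ≤ 2 * C * |x - y| / |t - x| := by
  set q := H y / (t - y)
  have hq : |q| ≤ C := abs_div_sub_le_of_lipschitzOnWith hH ht hy hHt
  have hHy : H y = q * (t - y) := by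
    rcases eq_or_ne t y with rfl | hty
    · simp [hHt]
    · exact (div_mul_cancel₀ _ (sub_ne_zero.2 hty)).symm
  have hdecomp : H x / (t - x) - q = (H x - H y + q * (x - y)) / (t - x) := by
    rw [hHy, eq_div_iff (sub_ne_zero.2 htx), sub_mul, div_mul_cancel₀ _ (sub_ne_zero.2 htx)]
    ring
  have hxy : |H x - H y| ≤ C * |x - y| := by
    simpa [Real.dist_eq] using hH.dist_le_mul x hx y hy
  rw [hdecomp, abs_div]
  gcongr
  calc |H x - H y + q * (x - y)| ≤ |H x - H y| + |q| * |x - y| :=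
        (abs_add_le _ _).trans_eq (by rw [abs_mul])
    _ ≤ C * |x - y| + C * |x - y| := by gcongr
    _ = 2 * C * |x - y| := by ring

theorem abs_div_sub_div_le_min_of_lipschitzOnWith (hH : LipschitzOnWith C H s) (ht : t ∈ s)
    (hx : x ∈ s) (hy : y ∈ s) (hHt : H t = 0) (htx : t ≠ x) :
    |H x / (t - x) - H y / (t - y)| ≤ 2 * C * min 1 (|x - y| / |t - x|) := by
  rw [mul_min_of_nonneg _ _ (by positivity), mul_one, ← mul_div_assoc]
  refine le_min ?_ (abs_div_sub_div_le_of_lipschitzOnWith hH ht hx hy hHt htx)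
  calc |H x / (t - x) - H y / (t - y)| ≤ |H x / (t - x)| + |H y / (t - y)| := abs_sub _ _
    _ ≤ C + C := add_le_add (abs_div_sub_le_of_lipschitzOnWith hH ht hx hHt)
        (abs_div_sub_le_of_lipschitzOnWith hH ht hy hHt)
    _ = 2 * C := by ring

end LipschitzDivSub

theorem taylorRemainderQuot_eq_div (φ : ℝ → ℝ) (k : ℕ) (x t : ℝ) :
    taylorRemainderQuot φ k x t = (φ t - taylorPoly φ k x t) / (t - x) ^ k / (t - x) := by
  rw [taylorRemainderQuot, pow_succ, div_div]

section TaylorRemainderQuot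

variable {φ : ℝ → ℝ} {k : ℕ} {K : ℝ≥0} {s : Set ℝ} {t x y : ℝ}

theorem abs_taylorRemainderQuot_le (hφ : ContDiff ℝ k φ) (hs : Convex ℝ s)
    (hK : LipschitzOnWith K (iteratedDeriv k φ) s) (ht : t ∈ s) (hx : x ∈ s) :
    |taylorRemainderQuot φ k x t| ≤ 2 * K := by
  rw [taylorRemainderQuot_eq_div]
  exact_mod_cast abs_div_sub_le_of_lipschitzOnWith
    (lipschitzOnWith_sub_taylorPoly_div_pow hφ hs hK ht) ht hx (by simp [taylorPoly_self])

theorem abs_taylorRemainderQuot_sub_le (hφ : ContDiff ℝ k φ) (hs : Convex ℝ s)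
    (hK : LipschitzOnWith K (iteratedDeriv k φ) s) (ht : t ∈ s) (hx : x ∈ s) (hy : y ∈ s)
    (htx : t ≠ x) :
    |taylorRemainderQuot φ k x t - taylorRemainderQuot φ k y t| ≤
      4 * K * min 1 (|x - y| / |t - x|) := by
  rw [taylorRemainderQuot_eq_div, taylorRemainderQuot_eq_div]
  convert abs_div_sub_div_le_min_of_lipschitzOnWith
    (lipschitzOnWith_sub_taylorPoly_div_pow hφ hs hK ht) ht hx hy (by simp [taylorPoly_self]) htx
    using 2
  push_cast
  ring

end TaylorRemainderQuot

theorem integrableOn_Icc_one_sub_rpow {r : ℝ} (hr : -1 < r) {a b : ℝ} (hab : a ≤ b) :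
    IntegrableOn (fun t => (1 - t) ^ r) (Icc a b) :=
  (intervalIntegrable_iff_integrableOn_Icc_of_le hab).1 <| by
    simpa using
      (intervalIntegral.intervalIntegrable_rpow' (a := 1 - a) (b := 1 - b) hr).comp_sub_left 1

theorem integrableOn_Icc_one_add_rpow {r : ℝ} (hr : -1 < r) {a b : ℝ} (hab : a ≤ b) :
    IntegrableOn (fun t => (1 + t) ^ r) (Icc a b) :=
  (intervalIntegrable_iff_integrableOn_Icc_of_le hab).1 <| by
    simpa using
      (intervalIntegral.intervalIntegrable_rpow' (a := 1 + a) (b := 1 + b) hr).comp_add_left 1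

theorem sqrt_add_le_sqrt_add_sqrt {a b : ℝ} (ha : 0 ≤ a) (hb : 0 ≤ b) : √(a + b) ≤ √a + √b := by
  rw [Real.sqrt_le_left (by positivity)]
  nlinarith [Real.sq_sqrt ha, Real.sq_sqrt hb, Real.sqrt_nonneg a, Real.sqrt_nonneg b]

theorem setIntegral_one_sub_rpow_neg_half_le {T : Set ℝ} {a b : ℝ} (hT : T ⊆ Icc a b)
    (hab : a ≤ b) (hb : b ≤ 1) : ∫ t in T, (1 - t) ^ (-(1 / 2) : ℝ) ≤ 2 * √(b - a) := by
  have hint := integrableOn_Icc_one_sub_rpow (r := -(1 / 2)) (by norm_num) hab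
  calc ∫ t in T, (1 - t) ^ (-(1 / 2) : ℝ)
      ≤ ∫ t in Icc a b, (1 - t) ^ (-(1 / 2) : ℝ) := by
        refine setIntegral_mono_set hint ?_ hT.eventuallyLE
        filter_upwards [ae_restrict_mem measurableSet_Icc] with t ht
        exact Real.rpow_nonneg (by linarith [ht.2]) _
    _ = 2 * (√(1 - a) - √(1 - b)) := by
        rw [integral_Icc_eq_integral_Ioc, ← intervalIntegral.integral_of_le hab,
          intervalIntegral.integral_comp_sub_left (fun s => s ^ (-(1 / 2) : ℝ)),
          integral_rpow (Or.inl (by norm_num)), Real.sqrt_eq_rpow, Real.sqrt_eq_rpow]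
        norm_num
        ring
    _ ≤ 2 * √(b - a) := by
        have := sqrt_add_le_sqrt_add_sqrt (sub_nonneg.2 hb) (sub_nonneg.2 hab)
        rw [show 1 - b + (b - a) = 1 - a by ring] at this
        linarith

section TailKernel

variable {δ : ℝ}

theorem indicator_Ici_mul_rpow_nonneg (hδ : 0 ≤ δ) (r : ℝ) :
    0 ≤ (Ici δ).indicator (fun r => δ * r ^ (-(3 / 2) : ℝ)) r :=
  indicator_nonneg (fun _ hr => mul_nonneg hδ (Real.rpow_nonneg (hδ.trans hr) _)) r

theorem integrable_indicator_Ici_mul_rpow (hδ : 0 < δ) :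
    Integrable ((Ici δ).indicator fun r => δ * r ^ (-(3 / 2) : ℝ)) := by
  rw [integrable_indicator_iff measurableSet_Ici, integrableOn_Ici_iff_integrableOn_Ioi]
  exact (integrableOn_Ioi_rpow_of_lt (by norm_num) hδ).const_mul δ

theorem integral_indicator_Ici_mul_rpow (hδ : 0 < δ) :
    ∫ r, (Ici δ).indicator (fun r => δ * r ^ (-(3 / 2) : ℝ)) r = 2 * √δ := by
  rw [integral_indicator measurableSet_Ici, integral_Ici_eq_integral_Ioi,
    integral_const_mul, integral_Ioi_rpow_of_lt (by norm_num) hδ, Real.sqrt_eq_rpow]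
  have : δ * δ ^ (-(3 / 2) + 1 : ℝ) = δ ^ (1 / 2 : ℝ) := by
    rw [← Real.rpow_one_add' hδ.le (by norm_num)]
    norm_num
  linear_combination 2 * this

theorem setIntegral_indicator_Ici_mul_rpow_le (hδ : 0 < δ) (x : ℝ) (S : Set ℝ) :
    ∫ t in S, ((Ici δ).indicator (fun r => δ * r ^ (-(3 / 2) : ℝ)) (t - x) +
      (Ici δ).indicator (fun r => δ * r ^ (-(3 / 2) : ℝ)) (x - t)) ≤ 4 * √δ := by
  set F : ℝ → ℝ := (Ici δ).indicator fun r => δ * r ^ (-(3 / 2) : ℝ)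
  have hF := integrable_indicator_Ici_mul_rpow hδ
  have hF0 := indicator_Ici_mul_rpow_nonneg hδ.le
  calc ∫ t in S, (F (t - x) + F (x - t)) ≤ ∫ t, (F (t - x) + F (x - t)) :=
        setIntegral_le_integral ((hF.comp_sub_right x).add (hF.comp_sub_left x))
          (.of_forall fun t => add_nonneg (hF0 _) (hF0 _))
    _ = 4 * √δ := by
        rw [integral_add (hF.comp_sub_right x) (hF.comp_sub_left x), integral_sub_right_eq_self,
          integral_sub_left_eq_self, integral_indicator_Ici_mul_rpow hδ]
        ring

theorem mul_abs_rpow_le_indicator_add_indicator (hδ : 0 < δ) {s : ℝ} (hs : δ < |s|) :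
    δ * |s| ^ (-(3 / 2) : ℝ) ≤ (Ici δ).indicator (fun r => δ * r ^ (-(3 / 2) : ℝ)) s +
      (Ici δ).indicator (fun r => δ * r ^ (-(3 / 2) : ℝ)) (-s) := by
  have hF0 := indicator_Ici_mul_rpow_nonneg hδ.le
  rcases abs_cases s with ⟨habs, -⟩ | ⟨habs, -⟩
  · rw [habs] at hs ⊢
    rw [indicator_of_mem (mem_Ici.2 hs.le)]
    linarith [hF0 (-s)]
  · rw [habs] at hs ⊢
    rw [indicator_of_mem (mem_Ici.2 hs.le) (fun r => δ * r ^ (-(3 / 2) : ℝ))]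
    linarith [hF0 s]

end TailKernel

theorem min_one_div_mul_one_sub_rpow_le {δ r t : ℝ} (hδ : 0 ≤ δ) (hr : 0 < r) (hrt : r ≤ 1 - t) :
    min 1 (δ / r) * (1 - t) ^ (-(1 / 2) : ℝ) ≤ δ * r ^ (-(3 / 2) : ℝ) :=
  calc min 1 (δ / r) * (1 - t) ^ (-(1 / 2) : ℝ) ≤ δ / r * r ^ (-(1 / 2) : ℝ) :=
        mul_le_mul (min_le_right _ _) (Real.rpow_le_rpow_of_nonpos hr hrt (by norm_num))
          (Real.rpow_nonneg (hr.le.trans hrt) _) (by positivity)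
    _ = δ * r ^ (-(3 / 2) : ℝ) := by
        rw [div_mul_eq_mul_div, mul_div_assoc, ← Real.rpow_sub_one hr.ne']
        norm_num

theorem min_one_div_le_sqrt {x δ t : ℝ} (hδ : 0 < δ) (ht : t ≤ 1) (hfar : δ < t - x)
    (hedge : 1 - t < t - x) : min 1 (δ / (t - x)) ≤ √(2 * δ / (1 - x)) := by
  refine (min_le_right _ _).trans (Real.le_sqrt_of_sq_le ?_)
  have h1 : δ / (t - x) ≤ 1 := (div_le_one (by linarith)).2 hfar.le
  have h2 : δ / (t - x) ≤ 2 * δ / (1 - x) := by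
    rw [div_le_div_iff₀ (by linarith) (by linarith)]
    nlinarith
  nlinarith [div_nonneg hδ.le (hδ.trans hfar).le]

/-- Near `x` the kernel is at most `1`; where `1 - t ≥ |t - x|` the weight is at most
`|t - x| ^ (-1/2)`; in the remaining region `t ≥ (1 + x) / 2`, so `|t - x| ≥ (1 - x) / 2` and the
kernel is at most `√(2δ / (1 - x))`. -/
theorem min_div_mul_one_sub_rpow_le {x δ t : ℝ} (hδ : 0 < δ) (hx : x ≤ 1) (ht : t < 1) :
    min 1 (δ / |t - x|) * (1 - t) ^ (-(1 / 2) : ℝ) ≤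
      (Icc (x - δ) (x + δ)).indicator (fun t => (1 - t) ^ (-(1 / 2) : ℝ)) t +
      ((Ici δ).indicator (fun r => δ * r ^ (-(3 / 2) : ℝ)) (t - x) +
        (Ici δ).indicator (fun r => δ * r ^ (-(3 / 2) : ℝ)) (x - t)) +
      √(2 * δ / (1 - x)) * (Ici ((1 + x) / 2)).indicator (fun t => (1 - t) ^ (-(1 / 2) : ℝ)) t := by
  set w : ℝ → ℝ := fun t => (1 - t) ^ (-(1 / 2) : ℝ)
  set F : ℝ → ℝ := (Ici δ).indicator fun r => δ * r ^ (-(3 / 2) : ℝ)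
  have hw : 0 ≤ w t := Real.rpow_nonneg (by linarith) _
  have hF := indicator_Ici_mul_rpow_nonneg hδ.le
  have hnear0 : 0 ≤ (Icc (x - δ) (x + δ)).indicator w t :=
    indicator_apply_nonneg fun _ => hw
  have hedge0 : 0 ≤ √(2 * δ / (1 - x)) * (Ici ((1 + x) / 2)).indicator w t :=
    mul_nonneg (Real.sqrt_nonneg _) (indicator_apply_nonneg fun _ => hw)
  have htail0 := add_nonneg (hF (t - x)) (hF (x - t))
  rcases le_or_gt |t - x| δ with hnear | hfar
  · have hmem : t ∈ Icc (x - δ) (x + δ) := by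
      constructor <;> linarith [(abs_le.1 hnear).1, (abs_le.1 hnear).2]
    have : min 1 (δ / |t - x|) * w t ≤ (Icc (x - δ) (x + δ)).indicator w t := by
      rw [indicator_of_mem hmem]
      exact mul_le_of_le_one_left (hw) (min_le_left _ _)
    linarith
  have hpos : 0 < |t - x| := hδ.trans hfar
  rcases le_or_gt |t - x| (1 - t) with hinner | hedge
  · have hkernel := min_one_div_mul_one_sub_rpow_le hδ.le hpos hinner
    have htail := mul_abs_rpow_le_indicator_add_indicator hδ hfar
    rw [neg_sub] at htail
    linarith
  · have hxt : x < t := by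
      by_contra! h
      rw [abs_of_nonpos (by linarith)] at hedge
      linarith
    rw [abs_of_pos (sub_pos.2 hxt)] at hfar hedge
    have hkernel := min_one_div_le_sqrt hδ ht.le hfar hedge
    have hmem : t ∈ Ici ((1 + x) / 2) := by
      simp only [mem_Ici]
      linarith
    have : min 1 (δ / |t - x|) * w t ≤
        √(2 * δ / (1 - x)) * (Ici ((1 + x) / 2)).indicator w t := by
      rw [indicator_of_mem hmem, abs_of_pos (sub_pos.2 hxt)]
      exact mul_le_mul_of_nonneg_right hkernel (hw)
    linarith

theorem setIntegral_indicator_Icc_one_sub_rpow_le {x δ : ℝ} {S : Set ℝ} (hS : S ⊆ Iic 1)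
    (hx : x ≤ 1) (hδ : 0 ≤ δ) :
    ∫ t in S, (Icc (x - δ) (x + δ)).indicator (fun t => (1 - t) ^ (-(1 / 2) : ℝ)) t ≤
      3 * √δ := by
  have hsqrt2 : √2 ≤ 3 / 2 := (Real.sqrt_le_left (by norm_num)).2 (by norm_num)
  rw [setIntegral_indicator measurableSet_Icc]
  calc ∫ t in S ∩ Icc (x - δ) (x + δ), (1 - t) ^ (-(1 / 2) : ℝ)
      ≤ 2 * √(min 1 (x + δ) - (x - δ)) :=
        setIntegral_one_sub_rpow_neg_half_le (fun t ht => ⟨ht.2.1, le_min (hS ht.1) ht.2.2⟩)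
          (le_min (by linarith) (by linarith)) (min_le_left _ _)
    _ ≤ 2 * (√2 * √δ) := by
        rw [← Real.sqrt_mul zero_le_two]
        gcongr
        linarith [min_le_right 1 (x + δ)]
    _ ≤ 3 * √δ := by nlinarith [Real.sqrt_nonneg δ]

theorem setIntegral_mul_indicator_Ici_one_sub_rpow_le {x δ : ℝ} {S : Set ℝ} (hS : S ⊆ Iic 1)
    (hx : x ≤ 1) (hδ : 0 ≤ δ) :
    ∫ t in S, √(2 * δ / (1 - x)) *
      (Ici ((1 + x) / 2)).indicator (fun t => (1 - t) ^ (-(1 / 2) : ℝ)) t ≤ 2 * √δ := by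
  have hc : 2 * δ / (1 - x) * (1 - (1 + x) / 2) ≤ δ := by
    rcases hx.lt_or_eq with hx1 | rfl
    · rw [div_mul_eq_mul_div, div_le_iff₀ (by linarith)]
      linarith
    · simpa using hδ
  rw [integral_const_mul, setIntegral_indicator measurableSet_Ici]
  calc √(2 * δ / (1 - x)) * ∫ t in S ∩ Ici ((1 + x) / 2), (1 - t) ^ (-(1 / 2) : ℝ)
      ≤ √(2 * δ / (1 - x)) * (2 * √(1 - (1 + x) / 2)) := by
        gcongr
        exact setIntegral_one_sub_rpow_neg_half_le (fun t ht => ⟨ht.2, hS ht.1⟩)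
          (by linarith) le_rfl
    _ = 2 * √(2 * δ / (1 - x) * (1 - (1 + x) / 2)) := by
        rw [Real.sqrt_mul' _ (by linarith)]
        ring
    _ ≤ 2 * √δ := by gcongr

theorem integral_min_div_mul_one_sub_rpow_le {x δ : ℝ} (hx : x ≤ 1) (hδ : 0 < δ) :
    ∫ t in Ioo (-1) 1, min 1 (δ / |t - x|) * (1 - t) ^ (-(1 / 2) : ℝ) ≤ 9 * √δ := by
  set w : ℝ → ℝ := fun t => (1 - t) ^ (-(1 / 2) : ℝ)
  set F : ℝ → ℝ := (Ici δ).indicator fun r => δ * r ^ (-(3 / 2) : ℝ)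
  have hS : Ioo (-1 : ℝ) 1 ⊆ Iic 1 := fun t ht => ht.2.le
  have hw : IntegrableOn w (Ioo (-1) 1) :=
    (integrableOn_Icc_one_sub_rpow (by norm_num) (by norm_num)).mono_set Ioo_subset_Icc_self
  have hF : Integrable F := integrable_indicator_Ici_mul_rpow hδ
  have hnear : IntegrableOn ((Icc (x - δ) (x + δ)).indicator w) (Ioo (-1) 1) :=
    hw.indicator measurableSet_Icc
  have htail : Integrable fun t => F (t - x) + F (x - t) :=
    (hF.comp_sub_right x).add (hF.comp_sub_left x)
  have hedge : IntegrableOn (fun t => √(2 * δ / (1 - x)) * (Ici ((1 + x) / 2)).indicator w t)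
      (Ioo (-1) 1) :=
    (hw.indicator measurableSet_Ici).const_mul _
  calc ∫ t in Ioo (-1) 1, min 1 (δ / |t - x|) * w t
      ≤ ∫ t in Ioo (-1) 1, ((Icc (x - δ) (x + δ)).indicator w t + (F (t - x) + F (x - t)) +
          √(2 * δ / (1 - x)) * (Ici ((1 + x) / 2)).indicator w t) := by
        refine integral_mono_of_nonneg ?_ ((hnear.add htail.integrableOn).add hedge) ?_
        · filter_upwards [ae_restrict_mem measurableSet_Ioo] with t ht
          exact mul_nonneg (le_min zero_le_one (by positivity))
            (Real.rpow_nonneg (by linarith [ht.2]) _)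
        · filter_upwards [ae_restrict_mem measurableSet_Ioo] with t ht
          exact min_div_mul_one_sub_rpow_le hδ hx ht.2
    _ = (∫ t in Ioo (-1) 1, (Icc (x - δ) (x + δ)).indicator w t) +
          (∫ t in Ioo (-1) 1, (F (t - x) + F (x - t))) +
          ∫ t in Ioo (-1) 1, √(2 * δ / (1 - x)) * (Ici ((1 + x) / 2)).indicator w t := by
        rw [integral_add
          (f := fun t => (Icc (x - δ) (x + δ)).indicator w t + (F (t - x) + F (x - t)))
          (hnear.add htail.integrableOn) hedge, integral_add hnear htail.integrableOn]
    _ ≤ 3 * √δ + 4 * √δ + 2 * √δ := by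
        gcongr
        · exact setIntegral_indicator_Icc_one_sub_rpow_le hS hx hδ.le
        · exact setIntegral_indicator_Ici_mul_rpow_le hδ x _
        · exact setIntegral_mul_indicator_Ici_one_sub_rpow_le hS hx hδ.le
    _ = 9 * √δ := by ring

theorem integral_Ioo_comp_neg {E : Type*} [NormedAddCommGroup E] [NormedSpace ℝ E] (f : ℝ → E)
    (a : ℝ) : ∫ t in Ioo (-a) a, f (-t) = ∫ t in Ioo (-a) a, f t := by
  have := (Homeomorph.neg ℝ).measurableEmbedding.setIntegral_map (μ := volume) f (Ioo (-a) a)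
  simpa [Measure.map_neg_eq_self, neg_Ioo] using this.symm

theorem Integrable.min_one_div_mul {μ : Measure ℝ} {g : ℝ → ℝ} (hg : Integrable g μ)
    (x : ℝ) {δ : ℝ} (hδ : 0 ≤ δ) : Integrable (fun t => min 1 (δ / |t - x|) * g t) μ :=
  hg.bdd_mul (c := 1) (Measurable.aestronglyMeasurable (by fun_prop)) (.of_forall fun t => by
    rw [Real.norm_eq_abs, abs_of_nonneg (le_min zero_le_one (by positivity))]
    exact min_le_left _ _)

theorem arcsineDensity_nonneg (t : ℝ) : 0 ≤ arcsineDensity t := by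
  unfold arcsineDensity
  positivity

theorem measurable_arcsineDensity : Measurable arcsineDensity := by
  unfold arcsineDensity
  fun_prop

theorem arcsineDensity_le {t : ℝ} (ht : t ∈ Ioo (-1) 1) :
    arcsineDensity t ≤ (1 - t) ^ (-(1 / 2) : ℝ) + (1 + t) ^ (-(1 / 2) : ℝ) := by
  obtain ⟨h1, h2⟩ := ht
  have hsq : 0 < 1 - t ^ 2 := by nlinarith
  have hle : ∀ u, 0 < u → u ≤ 1 - t ^ 2 → arcsineDensity t ≤ u ^ (-(1 / 2) : ℝ) := by
    intro u hu hut
    rw [arcsineDensity, Real.rpow_neg hu.le, ← Real.sqrt_eq_rpow, one_div]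
    refine inv_anti₀ (Real.sqrt_pos.2 hu) ((Real.sqrt_le_sqrt hut).trans ?_)
    exact le_mul_of_one_le_left (Real.sqrt_nonneg _) (by linarith [Real.pi_gt_three])
  have h1' : 0 ≤ (1 - t) ^ (-(1 / 2) : ℝ) := Real.rpow_nonneg (by linarith) _
  have h2' : 0 ≤ (1 + t) ^ (-(1 / 2) : ℝ) := Real.rpow_nonneg (by linarith) _
  rcases le_total 0 t with h | h
  · linarith [hle (1 - t) (by linarith) (by nlinarith)]
  · linarith [hle (1 + t) (by linarith) (by nlinarith)]

theorem integrableOn_arcsineDensity : IntegrableOn arcsineDensity (Ioo (-1) 1) := by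
  refine Integrable.mono'
    (((integrableOn_Icc_one_sub_rpow (r := -(1 / 2)) (by norm_num) (by norm_num)).add
      (integrableOn_Icc_one_add_rpow (r := -(1 / 2)) (by norm_num) (by norm_num))).mono_set
        Ioo_subset_Icc_self)
    measurable_arcsineDensity.aestronglyMeasurable ?_
  filter_upwards [ae_restrict_mem measurableSet_Ioo] with t ht
  rw [Real.norm_eq_abs, abs_of_nonneg (arcsineDensity_nonneg t)]
  exact arcsineDensity_le ht

theorem integral_min_div_mul_arcsineDensity_le {x δ : ℝ} (hx : x ∈ Icc (-1) 1) (hδ : 0 < δ) :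
    ∫ t in Ioo (-1) 1, min 1 (δ / |t - x|) * arcsineDensity t ≤ 18 * √δ := by
  have hsub : IntegrableOn (fun t => min 1 (δ / |t - x|) * (1 - t) ^ (-(1 / 2) : ℝ)) (Ioo (-1) 1) :=
    Integrable.min_one_div_mul ((integrableOn_Icc_one_sub_rpow (by norm_num)
      (by norm_num : (-1 : ℝ) ≤ 1)).mono_set Ioo_subset_Icc_self) x hδ.le
  have hadd : IntegrableOn (fun t => min 1 (δ / |t - x|) * (1 + t) ^ (-(1 / 2) : ℝ)) (Ioo (-1) 1) :=
    Integrable.min_one_div_mul ((integrableOn_Icc_one_add_rpow (by norm_num)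
      (by norm_num : (-1 : ℝ) ≤ 1)).mono_set Ioo_subset_Icc_self) x hδ.le
  have hreflect : ∫ t in Ioo (-1) 1, min 1 (δ / |t - x|) * (1 + t) ^ (-(1 / 2) : ℝ) =
      ∫ t in Ioo (-1) 1, min 1 (δ / |t - -x|) * (1 - t) ^ (-(1 / 2) : ℝ) := by
    rw [← integral_Ioo_comp_neg (fun t => min 1 (δ / |t - -x|) * (1 - t) ^ (-(1 / 2) : ℝ))]
    simp only [sub_neg_eq_add, neg_add_eq_sub, abs_sub_comm x]
  calc ∫ t in Ioo (-1) 1, min 1 (δ / |t - x|) * arcsineDensity t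
      ≤ ∫ t in Ioo (-1) 1, (min 1 (δ / |t - x|) * (1 - t) ^ (-(1 / 2) : ℝ) +
          min 1 (δ / |t - x|) * (1 + t) ^ (-(1 / 2) : ℝ)) := by
        refine setIntegral_mono_on (Integrable.min_one_div_mul integrableOn_arcsineDensity x hδ.le)
          (hsub.add hadd) measurableSet_Ioo fun t ht => ?_
        rw [← mul_add]
        exact mul_le_mul_of_nonneg_left (arcsineDensity_le ht) (le_min zero_le_one (by positivity))
    _ = (∫ t in Ioo (-1) 1, min 1 (δ / |t - x|) * (1 - t) ^ (-(1 / 2) : ℝ)) +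
          ∫ t in Ioo (-1) 1, min 1 (δ / |t - -x|) * (1 - t) ^ (-(1 / 2) : ℝ) := by
        rw [integral_add hsub hadd, hreflect]
    _ ≤ 9 * √δ + 9 * √δ := add_le_add (integral_min_div_mul_one_sub_rpow_le hx.2 hδ)
        (integral_min_div_mul_one_sub_rpow_le (by linarith [hx.1]) hδ)
    _ = 18 * √δ := by ring

theorem measurable_taylorRemainderQuot {φ : ℝ → ℝ} (hφ : Continuous φ) (k : ℕ) (x : ℝ) :
    Measurable (taylorRemainderQuot φ k x) := by
  have := hφ.measurable
  unfold taylorRemainderQuot taylorPoly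
  fun_prop

theorem abs_integral_taylorRemainderQuot_sub_le {φ : ℝ → ℝ} {k : ℕ} (hφ : ContDiff ℝ k φ)
    {K : ℝ≥0} (hK : LipschitzOnWith K (iteratedDeriv k φ) (Icc (-1) 1)) {x y : ℝ}
    (hx : x ∈ Icc (-1) 1) (hy : y ∈ Icc (-1) 1) :
    |(∫ t in Ioo (-1) 1, taylorRemainderQuot φ k x t * arcsineDensity t) -
        ∫ t in Ioo (-1) 1, taylorRemainderQuot φ k y t * arcsineDensity t| ≤
      72 * K * √|x - y| := by
  rcases eq_or_ne x y with rfl | hxy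
  · simp
  have hint : ∀ z ∈ Icc (-1 : ℝ) 1,
      IntegrableOn (fun t => taylorRemainderQuot φ k z t * arcsineDensity t) (Ioo (-1) 1) :=
    fun z hz => Integrable.bdd_mul integrableOn_arcsineDensity
      (measurable_taylorRemainderQuot hφ.continuous k z).aestronglyMeasurable
      ((ae_restrict_mem measurableSet_Ioo).mono fun t ht =>
        abs_taylorRemainderQuot_le hφ (convex_Icc _ _) hK (Ioo_subset_Icc_self ht) hz)
  have hδ : 0 < |x - y| := abs_pos.2 (sub_ne_zero.2 hxy)
  rw [← integral_sub (hint x hx) (hint y hy)]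
  calc |∫ t in Ioo (-1) 1, (taylorRemainderQuot φ k x t * arcsineDensity t -
          taylorRemainderQuot φ k y t * arcsineDensity t)|
      ≤ ∫ t in Ioo (-1) 1, 4 * K * (min 1 (|x - y| / |t - x|) * arcsineDensity t) := by
        rw [← Real.norm_eq_abs]
        refine norm_integral_le_of_norm_le
          ((Integrable.min_one_div_mul integrableOn_arcsineDensity x hδ.le).const_mul
            (4 * (K : ℝ))) ?_
        filter_upwards [ae_restrict_mem measurableSet_Ioo,
          ae_restrict_of_ae (Measure.ae_ne volume x)]
          with t ht htx
        rw [Real.norm_eq_abs, ← sub_mul, abs_mul, abs_of_nonneg (arcsineDensity_nonneg t),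
          ← mul_assoc]
        exact mul_le_mul_of_nonneg_right (abs_taylorRemainderQuot_sub_le hφ (convex_Icc _ _) hK
          (Ioo_subset_Icc_self ht) hx hy htx) (arcsineDensity_nonneg t)
    _ ≤ 4 * K * (18 * √|x - y|) := by
        rw [integral_const_mul]
        gcongr
        exact integral_min_div_mul_arcsineDensity_le hx hδ
    _ = 72 * K * √|x - y| := by ring

theorem sqrt_le_two_mul_rpow {δ α : ℝ} (hδ : 0 ≤ δ) (hδ2 : δ ≤ 2) (hα : 0 < α) (hα2 : α ≤ 1 / 2) :
    √δ ≤ 2 * δ ^ α := by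
  rcases hδ.eq_or_lt with rfl | hδ
  · simp [Real.zero_rpow hα.ne']
  have h1 : δ ^ (1 / 2 - α) ≤ 2 := calc
    δ ^ (1 / 2 - α) ≤ 2 ^ (1 / 2 - α) := Real.rpow_le_rpow hδ.le hδ2 (by linarith)
    _ ≤ 2 ^ (1 : ℝ) := Real.rpow_le_rpow_of_exponent_le one_le_two (by linarith)
    _ = 2 := Real.rpow_one 2
  calc √δ = δ ^ α * δ ^ (1 / 2 - α) := by
        rw [Real.sqrt_eq_rpow, ← Real.rpow_add hδ]
        ring_nf
    _ ≤ δ ^ α * 2 := by gcongr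
    _ = 2 * δ ^ α := mul_comm _ _

/-- for `φ ∈ C^{k,1}([-1,1])`, the map `x ↦ ∫ F_k(x,t) ϱ(dt)`
is `α`-Hölder continuous on `[-1,1]` for every `α ≤ 1/2`. -/
theorem finite_hilbert_kernel_holder (k : ℕ) (φ : ℝ → ℝ) (hφ : ContDiff ℝ k φ)
    (Hc : ℝ)
    (hLip : ∀ x ∈ Icc (-1 : ℝ) 1, ∀ y ∈ Icc (-1 : ℝ) 1,
      |iteratedDeriv k φ x - iteratedDeriv k φ y| ≤ Hc * |x - y|) :
    ∀ α : ℝ, 0 < α → α ≤ 1 / 2 →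
      ∃ C : ℝ, 0 < C ∧ ∀ x ∈ Icc (-1 : ℝ) 1, ∀ y ∈ Icc (-1 : ℝ) 1,
        |(∫ t in Ioo (-1 : ℝ) 1, taylorRemainderQuot φ k x t * arcsineDensity t)
            - ∫ t in Ioo (-1 : ℝ) 1, taylorRemainderQuot φ k y t * arcsineDensity t|
          ≤ C * |x - y| ^ α := by
  intro α hα hα2
  have hK : LipschitzOnWith (Real.toNNReal Hc) (iteratedDeriv k φ) (Icc (-1) 1) :=
    LipschitzOnWith.of_dist_le' (by simpa only [Real.dist_eq] using hLip)
  refine ⟨144 * Real.toNNReal Hc + 1, by positivity, fun x hx y hy => ?_⟩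
  have hδ2 : |x - y| ≤ 2 := abs_sub_le_iff.2 ⟨by linarith [hx.2, hy.1], by linarith [hx.1, hy.2]⟩
  calc _ ≤ 72 * Real.toNNReal Hc * √|x - y| := abs_integral_taylorRemainderQuot_sub_le hφ hK hx hy
    _ ≤ 72 * Real.toNNReal Hc * (2 * |x - y| ^ α) := by
        gcongr
        exact sqrt_le_two_mul_rpow (abs_nonneg _) hδ2 hα hα2
    _ ≤ (144 * Real.toNNReal Hc + 1) * |x - y| ^ α := by
        have := Real.rpow_nonneg (abs_nonneg (x - y)) α
        nlinarith
end
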